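/- Under the action of O(n) on Sym(n,ℝ) by A · X = A X Aᵀ, every SO(n)-invariant symmetric trilinear form on Sym(n,ℝ) is automatically O(n)-invariant. -/

import Mathlib

open Matrix

/-- The submodule of symmetric `n × n` real matrices. -/
def symSubmodule (n : ℕ) : Submodule ℝ (Matrix (Fin n) (Fin n) ℝ) where
  carrier := {X | X.IsSymm}
  add_mem' := fun ha hb => ha.add hb
  zero_mem' := by simp [Matrix.IsSymm]
  smul_mem' := fun c X hX => hX.smul c

/-- The type of symmetric `n × n` real matrices `Sym(n,ℝ)`. -/
abbrev SymMat (n : ℕ) := ↥(symSubmodule n)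

/-- A map `V → V → V → ℝ` is a symmetric trilinear form if it is linear in the
first argument and fully symmetric. -/
def IsSymTrilinear {V : Type*} [AddCommGroup V] [Module ℝ V]
    (C : V → V → V → ℝ) : Prop :=
  (∀ y z : V, IsLinearMap ℝ fun x => C x y z) ∧
  (∀ x y z : V, C x y z = C y x z) ∧
  (∀ x y z : V, C x y z = C x z y)

/-- Conjugation `X ↦ A X Aᵀ` of a symmetric matrix is symmetric. -/
theorem conj_isSymm {n : ℕ} (A : Matrix (Fin n) (Fin n) ℝ)
    (X : SymMat n) : (A * (X : Matrix (Fin n) (Fin n) ℝ) * Aᵀ).IsSymm := by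
  have hX : (X : Matrix (Fin n) (Fin n) ℝ)ᵀ = (X : Matrix (Fin n) (Fin n) ℝ) := X.2
  unfold Matrix.IsSymm
  rw [Matrix.transpose_mul, Matrix.transpose_mul, Matrix.transpose_transpose,
    hX, Matrix.mul_assoc]

/-- The action of a matrix `A` on `Sym(n,ℝ)` by `X ↦ A X Aᵀ`. -/
def conjS {n : ℕ} (A : Matrix (Fin n) (Fin n) ℝ) (X : SymMat n) : SymMat n :=
  ⟨A * (X : Matrix (Fin n) (Fin n) ℝ) * Aᵀ, conj_isSymm A X⟩

/-!
By polarization a symmetric trilinear form is determined by its cubic form `X ↦ C X X X`, so it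
suffices to show that the cubic form is `O(n)`-invariant. Every symmetric `X = U Λ Uᵀ` is fixed by
the reflection `R = U D Uᵀ`, `D = diag(-1, 1, …, 1)`, since `D` commutes with `Λ`. For orthogonal
`A` with `det A = -1` the matrix `A R` lies in `SO(n)` and moves `X` to the same point as `A`.
-/

lemma conjS_mul {n : ℕ} (A B : Matrix (Fin n) (Fin n) ℝ) (X : SymMat n) :
    conjS (A * B) X = conjS A (conjS B X) :=
  Subtype.ext <| by simp [conjS, Matrix.transpose_mul, Matrix.mul_assoc]

lemma isLinearMap_conjS {n : ℕ} (A : Matrix (Fin n) (Fin n) ℝ) : IsLinearMap ℝ (conjS A) where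
  map_add X Y := Subtype.ext <| by simp [conjS, Matrix.mul_add, Matrix.add_mul]
  map_smul c X := Subtype.ext <| by simp [conjS]

namespace IsSymTrilinear

variable {V W : Type*} [AddCommGroup V] [Module ℝ V] [AddCommGroup W] [Module ℝ W]
  {C C' : V → V → V → ℝ}

lemma isLinearMap₂ (hC : IsSymTrilinear C) (x z : V) : IsLinearMap ℝ fun y => C x y z := by
  simp only [hC.2.1 x]
  exact hC.1 x z

lemma isLinearMap₃ (hC : IsSymTrilinear C) (x y : V) : IsLinearMap ℝ fun z => C x y z := by
  simp only [hC.2.2 x y]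
  exact hC.isLinearMap₂ x y

lemma sub (hC : IsSymTrilinear C) (hC' : IsSymTrilinear C') :
    IsSymTrilinear fun x y z => C x y z - C' x y z :=
  ⟨fun y z => ((hC.1 y z).mk' _ - (hC'.1 y z).mk' _).isLinear,
    fun x y z => by dsimp only; rw [hC.2.1, hC'.2.1],
    fun x y z => by dsimp only; rw [hC.2.2, hC'.2.2]⟩

lemma comp (hC : IsSymTrilinear C) {f : W → V} (hf : IsLinearMap ℝ f) :
    IsSymTrilinear fun x y z => C (f x) (f y) (f z) :=
  ⟨fun y z => ((hC.1 (f y) (f z)).mk' _ ∘ₗ hf.mk' f).isLinear,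
    fun _ _ _ => hC.2.1 _ _ _, fun _ _ _ => hC.2.2 _ _ _⟩

lemma apply_add_self (hC : IsSymTrilinear C) (x y : V) :
    C (x + y) (x + y) (x + y) = C x x x + 3 * C x x y + 3 * C x y y + C y y y := by
  simp only [(hC.1 _ _).map_add, (hC.isLinearMap₂ _ _).map_add, (hC.isLinearMap₃ _ _).map_add]
  linarith [hC.2.2 x y x, hC.2.1 y x x, hC.2.1 y x y, hC.2.2 y y x]

lemma eq_zero_of_apply_self (hC : IsSymTrilinear C) (h : ∀ x, C x x x = 0) (x y z : V) :
    C x y z = 0 := by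
  have hxyy (x y : V) : C x y y = 0 := by
    have hplus := hC.apply_add_self x y
    have hminus := hC.apply_add_self x (-y)
    simp only [(hC.1 _ _).map_neg, (hC.isLinearMap₂ _ _).map_neg, (hC.isLinearMap₃ _ _).map_neg,
      neg_neg, h] at hplus hminus
    linarith
  have := hxyy x (y + z)
  rw [(hC.isLinearMap₂ _ _).map_add, (hC.isLinearMap₃ _ _).map_add, (hC.isLinearMap₃ _ _).map_add,
    hxyy, hxyy, hC.2.2 x z y] at this
  linarith

lemma eq_of_apply_self_eq (hC : IsSymTrilinear C) (hC' : IsSymTrilinear C')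
    (h : ∀ x, C x x x = C' x x x) (x y z : V) : C x y z = C' x y z :=
  sub_eq_zero.mp <| (hC.sub hC').eq_zero_of_apply_self (fun x => sub_eq_zero.mpr (h x)) x y z

end IsSymTrilinear

lemma Matrix.IsSymm.exists_reflection_conj_eq {ι : Type*} [Fintype ι] [DecidableEq ι]
    [Nonempty ι] {X : Matrix ι ι ℝ} (hX : X.IsSymm) :
    ∃ R : Matrix ι ι ℝ, R * Rᵀ = 1 ∧ R.det = -1 ∧ R * X * Rᵀ = X := by
  have hH : X.IsHermitian := by rwa [IsHermitian, conjTranspose_eq_transpose_of_trivial]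
  set U : Matrix ι ι ℝ := (hH.eigenvectorUnitary : Matrix ι ι ℝ)
  have hUUt : U * Uᵀ = 1 := by
    simpa [U, star_eq_conjTranspose] using Unitary.coe_mul_star_self hH.eigenvectorUnitary
  have hUtU (M : Matrix ι ι ℝ) : Uᵀ * (U * M) = M := by
    rw [← Matrix.mul_assoc, (mul_eq_one_comm).mp hUUt, Matrix.one_mul]
  obtain ⟨v, hXU⟩ : ∃ v, X = U * diagonal v * Uᵀ :=
    ⟨hH.eigenvalues, by simpa [U, star_eq_conjTranspose] using hH.spectral_theorem⟩
  obtain ⟨i₀⟩ := ‹Nonempty ι›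
  set s : ι → ℝ := Function.update 1 i₀ (-1)
  have hss (i : ι) : s i * s i = 1 := by
    rcases eq_or_ne i i₀ with rfl | h <;> simp [s, *]
  refine ⟨U * diagonal s * Uᵀ, ?_, ?_, ?_⟩
  · simp only [transpose_mul, transpose_transpose, diagonal_transpose, Matrix.mul_assoc, hUtU]
    rw [← Matrix.mul_assoc (diagonal s), diagonal_mul_diagonal]
    simp only [hss, diagonal_one, Matrix.one_mul, hUUt]
  · have hdetU : U.det * U.det = 1 := by
      simpa using congrArg det hUUt
    rw [det_mul, det_mul, det_transpose, det_diagonal,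
      Finset.prod_update_of_mem (Finset.mem_univ _)]
    simp only [Pi.one_apply, Finset.prod_const_one, mul_one, mul_neg, neg_mul, neg_inj]
    linear_combination hdetU
  · rw [hXU]
    simp only [transpose_mul, transpose_transpose, diagonal_transpose, Matrix.mul_assoc, hUtU]
    simp only [← Matrix.mul_assoc, diagonal_mul_diagonal, mul_left_comm (s _), hss, mul_one]

lemma Matrix.det_eq_one_or_neg_one_of_mul_transpose {ι : Type*} [Fintype ι] [DecidableEq ι]
    {A : Matrix ι ι ℝ} (hA : A * Aᵀ = 1) : A.det = 1 ∨ A.det = -1 :=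
  mul_self_eq_one_iff.mp <| by simpa using congrArg det hA

lemma apply_conjS_self_of_SO_invariant {n : ℕ} {C : SymMat n → SymMat n → SymMat n → ℝ}
    (hSO : ∀ A : Matrix (Fin n) (Fin n) ℝ, A * Aᵀ = 1 → A.det = 1 →
      ∀ X Y Z : SymMat n, C (conjS A X) (conjS A Y) (conjS A Z) = C X Y Z)
    {A : Matrix (Fin n) (Fin n) ℝ} (hA : A * Aᵀ = 1) (X : SymMat n) :
    C (conjS A X) (conjS A X) (conjS A X) = C X X X := by
  rcases det_eq_one_or_neg_one_of_mul_transpose hA with hdet | hdet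
  · exact hSO A hA hdet X X X
  have : Nonempty (Fin n) := by
    refine (isEmpty_or_nonempty _).resolve_left fun _ => ?_
    norm_num [det_isEmpty] at hdet
  obtain ⟨R, hR, hRdet, hRX⟩ := X.2.exists_reflection_conj_eq
  have hAR : A * R * (A * R)ᵀ = 1 := by
    rw [transpose_mul, Matrix.mul_assoc, ← Matrix.mul_assoc R, hR, Matrix.one_mul, hA]
  have hconj : conjS (A * R) X = conjS A X := by
    rw [conjS_mul, show conjS R X = X from Subtype.ext hRX]
  rw [← hconj]
  exact hSO (A * R) hAR (by rw [det_mul, hdet, hRdet]; norm_num) X X X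

/-- Every `SO(n)`-invariant symmetric trilinear form on `Sym(n,ℝ)` (under the
action `A · X = A X Aᵀ`) is automatically `O(n)`-invariant. -/
theorem stmt_13 (n : ℕ) (C : SymMat n → SymMat n → SymMat n → ℝ)
    (hC : IsSymTrilinear C)
    (hSO : ∀ A : Matrix (Fin n) (Fin n) ℝ, A * Aᵀ = 1 → A.det = 1 →
      ∀ X Y Z : SymMat n, C (conjS A X) (conjS A Y) (conjS A Z) = C X Y Z) :
    ∀ A : Matrix (Fin n) (Fin n) ℝ, A * Aᵀ = 1 →
      ∀ X Y Z : SymMat n, C (conjS A X) (conjS A Y) (conjS A Z) = C X Y Z :=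
  fun _ hA => (hC.comp (isLinearMap_conjS _)).eq_of_apply_self_eq hC
    (apply_conjS_self_of_SO_invariant hSO hA)
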